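/- arXiv:1512.03503 — 4 statements merged into one kernel-verified Lean document; each statement's English description precedes it below -/
import Mathlib

section
/- Let M ∈ K^{σ×σ} be a Jordan matrix with blocks ((x_1,σ_1),…,(x_n,σ_n)) (block j of size σ_j with eigenvalue x_j), let P ∈ K[X]^{m×m}, and E ∈ K^{m×σ} with column blocks E_j ∈ K^{m×σ_j}. For each j, let e_j(X) = E_j·(1,X,…,X^{σ_j−1})ᵀ ∈ K[X]^{m×1} and f_j(X) = P(X+x_j)·e_j(X) mod X^{σ_j}. Then P·E = F where F's j-th column block is the matrix of coefficients of degrees 0,…,σ_j−1 of f_j. -/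
/-!
Each Jordan block is `x_j + N` with `N` the nilpotent shift, so `p(M)` is block diagonal with
blocks `p(x_j + N) = q(N)` for `q = p(X + x_j)`. The entry `(a, b)` of `q(N)` is the coefficient
`q_{b-a}`, so multiplying a row vector, read as the polynomial `∑ e_a X^a`, by `q(N)` is
multiplication by `q` modulo `X^σ_j`.
-/

open Polynomial Matrix

/-- The Jordan matrix with blocks of sizes `σs j` and eigenvalues `x j` (each block is
upper triangular with the eigenvalue on the diagonal and `1` on the superdiagonal). -/
def jordanMat {K : Type*} [Field K] {n : ℕ} (σs : Fin n → ℕ) (x : Fin n → K) :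
    Matrix ((j : Fin n) × Fin (σs j)) ((j : Fin n) × Fin (σs j)) K :=
  fun a b =>
    if a.1 = b.1 then
      if (a.2 : ℕ) = (b.2 : ℕ) then x a.1
      else if (a.2 : ℕ) + 1 = (b.2 : ℕ) then 1 else 0
    else 0

namespace Matrix

section BlockDiagonal

variable {R o : Type*} {m' : o → Type*} [CommSemiring R] [Fintype o] [DecidableEq o]
  [∀ i, Fintype (m' i)] [∀ i, DecidableEq (m' i)]

variable (R m') in
def blockDiagonal'AlgHom :
    (∀ i, Matrix (m' i) (m' i) R) →ₐ[R] Matrix (Σ i, m' i) (Σ i, m' i) R :=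
  { blockDiagonal'RingHom m' R with
    commutes' := fun r => by simp [Algebra.algebraMap_eq_smul_one] }

theorem aeval_blockDiagonal' (M : ∀ i, Matrix (m' i) (m' i) R) (p : R[X]) :
    aeval (blockDiagonal' M) p = blockDiagonal' fun i => aeval (M i) p := by
  rw [← aeval_pi_apply]
  exact aeval_algHom_apply (blockDiagonal'AlgHom R m') M p

omit [∀ i, DecidableEq (m' i)] in
theorem vecMul_blockDiagonal'_apply (v : (Σ i, m' i) → R) (M : ∀ i, Matrix (m' i) (m' i) R)
    (j : o) (d : m' j) :
    (v ᵥ* blockDiagonal' M) ⟨j, d⟩ = ((fun e => v ⟨j, e⟩) ᵥ* M j) d := by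
  simp only [vecMul, dotProduct, ← Finset.univ_sigma_univ, Finset.sum_sigma]
  rw [Fintype.sum_eq_single j fun j' hj' =>
    Finset.sum_eq_zero fun e _ => by rw [blockDiagonal'_apply_ne M e d hj', mul_zero]]
  simp only [blockDiagonal'_apply_eq]

end BlockDiagonal

section Shift

variable (R : Type*) [Semiring R]

def shiftMatrix (σ : ℕ) : Matrix (Fin σ) (Fin σ) R :=
  of fun a b => if (a : ℕ) + 1 = b then 1 else 0

theorem shiftMatrix_pow_apply (σ k : ℕ) (a b : Fin σ) :
    (shiftMatrix R σ ^ k) a b = if (a : ℕ) + k = b then 1 else 0 := by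
  induction k generalizing b with
  | zero => simp [one_apply, Fin.ext_iff]
  | succ k ih =>
    rw [pow_succ, mul_apply]
    simp only [ih]
    simp only [shiftMatrix, of_apply, ite_mul, one_mul, zero_mul,
      Fin.sum_univ_eq_sum_range (fun c => if (a : ℕ) + k = c then
        (if c + 1 = (b : ℕ) then (1 : R) else 0) else 0), Finset.sum_ite_eq, Finset.mem_range]
    split_ifs <;> first | rfl | omega

end Shift

section ShiftAeval

variable {R : Type*} [CommSemiring R] {σ : ℕ}

theorem aeval_shiftMatrix_apply (q : R[X]) (a b : Fin σ) :
    aeval (shiftMatrix R σ) q a b = if (a : ℕ) ≤ b then q.coeff (b - a) else 0 := by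
  induction q using Polynomial.induction_on' with
  | add p q hp hq =>
    simp only [map_add, add_apply, hp, hq, coeff_add]
    split_ifs <;> simp
  | monomial n r =>
    simp only [aeval_monomial, Algebra.algebraMap_eq_smul_one, smul_mul, one_mul, smul_apply,
      shiftMatrix_pow_apply, coeff_monomial, smul_eq_mul, mul_ite, mul_one, mul_zero]
    split_ifs <;> first | rfl | omega

theorem vecMul_aeval_shiftMatrix_apply (v : Fin σ → R) (q : R[X]) (d : Fin σ) :
    (v ᵥ* aeval (shiftMatrix R σ) q) d = (q * ∑ e, C (v e) * X ^ (e : ℕ)).coeff d := by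
  simp only [vecMul, dotProduct, aeval_shiftMatrix_apply, Finset.mul_sum, finsetSum_coeff,
    ← mul_assoc, coeff_mul_X_pow', coeff_mul_C, ite_mul, zero_mul, mul_comm (v _)]

end ShiftAeval

end Matrix

theorem Polynomial.coeff_modByMonic_X_pow_of_lt {R : Type*} [Ring R] (p : R[X]) {σ d : ℕ}
    (hd : d < σ) : (p %ₘ X ^ σ).coeff d = p.coeff d := by
  conv_rhs => rw [← modByMonic_add_div p (X ^ σ), coeff_add, coeff_X_pow_mul',
    if_neg (not_le.mpr hd), add_zero]

section Jordan

variable {K : Type*} [Field K] {n : ℕ} (σs : Fin n → ℕ) (x : Fin n → K)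

theorem jordanMat_eq_blockDiagonal' :
    jordanMat σs x = blockDiagonal' fun j => aeval (shiftMatrix K (σs j)) (X + C (x j)) := by
  ext ⟨j, a⟩ ⟨j', b⟩
  rcases eq_or_ne j j' with rfl | h
  · simp only [jordanMat, blockDiagonal'_apply_eq, map_add, aeval_X, aeval_C, Matrix.add_apply,
      shiftMatrix, of_apply, algebraMap_matrix_apply, Algebra.algebraMap_self, RingHom.id_apply,
      Fin.ext_iff, if_true]
    split_ifs <;> first | simp only [add_zero, zero_add] | omega
  · simp only [jordanMat, blockDiagonal'_apply_ne _ _ _ h, if_neg h]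

theorem vecMul_aeval_jordanMat_apply (v : (Σ j, Fin (σs j)) → K) (q : K[X]) (j : Fin n)
    (d : Fin (σs j)) :
    (v ᵥ* aeval (jordanMat σs x) q) ⟨j, d⟩ =
      (q.comp (X + C (x j)) * ∑ e : Fin (σs j), C (v ⟨j, e⟩) * X ^ (e : ℕ)).coeff d := by
  rw [jordanMat_eq_blockDiagonal', aeval_blockDiagonal', vecMul_blockDiagonal'_apply,
    ← aeval_comp, vecMul_aeval_shiftMatrix_apply]

end Jordan

theorem residual_formula_jordan_general
    {K : Type*} [Field K] {m n : ℕ} (σs : Fin n → ℕ)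
    (x : Fin n → K)
    (E : Matrix (Fin m) ((j : Fin n) × Fin (σs j)) K)
    (P : Matrix (Fin m) (Fin m) (Polynomial K)) :
    ∀ (i : Fin m) (j : Fin n) (d : Fin (σs j)),
      (∑ c, Matrix.vecMul (E c) (Polynomial.aeval (jordanMat σs x) (P i c))) ⟨j, d⟩ =
        ((∑ c, ((P i c).comp (Polynomial.X + Polynomial.C (x j))) *
            (∑ e : Fin (σs j), Polynomial.C (E c ⟨j, e⟩) * Polynomial.X ^ (e : ℕ)))
          %ₘ (Polynomial.X ^ (σs j))).coeff (d : ℕ) := by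
  intro i j d
  rw [coeff_modByMonic_X_pow_of_lt _ d.isLt, finsetSum_coeff, Finset.sum_apply]
  exact Finset.sum_congr rfl fun c _ => vecMul_aeval_jordanMat_apply σs x (E c) (P i c) j d

/-- computing the residual `P·E` for a Jordan multiplication matrix. For
each block `j`, with `e_j(X) = E_j·(1,X,…,X^{σ_j−1})ᵀ` and
`f_j = P(X+x_j)·e_j mod X^{σ_j}`, the column block `j` of `P·E` is given by the
coefficients of degrees `0,…,σ_j−1` of `f_j`. -/
theorem residual_formula_jordan
    {K : Type*} [Field K] {m n : ℕ} (σs : Fin n → ℕ) (hσs : ∀ j, 0 < σs j)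
    (x : Fin n → K)
    (E : Matrix (Fin m) ((j : Fin n) × Fin (σs j)) K)
    (P : Matrix (Fin m) (Fin m) (Polynomial K)) :
    ∀ (i : Fin m) (j : Fin n) (d : Fin (σs j)),
      (∑ c, Matrix.vecMul (E c) (Polynomial.aeval (jordanMat σs x) (P i c))) ⟨j, d⟩ =
        ((∑ c, ((P i c).comp (Polynomial.X + Polynomial.C (x j))) *
            (∑ e : Fin (σs j), Polynomial.C (E c ⟨j, e⟩) * Polynomial.X ^ (e : ℕ)))
          %ₘ (Polynomial.X ^ (σs j))).coeff (d : ℕ) :=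
  residual_formula_jordan_general σs x E P
end

section
/- Let E ∈ K^{m×σ}, M ∈ K^{σ×σ}, s ∈ ℕ^m, δ ≥ deg of the minimal polynomial of M. Suppose that row i = φ(c,d) of the priority-permuted Krylov matrix K_{δ,s}(E,M) is a K-linear combination of the rows with indices < i. Then for every d' ∈ {0,…,δ−d}, row i' = φ(c,d+d') is a K-linear combination of the rows with indices < i'. -/
open Polynomial Matrix

/-!
Multiplying a dependency of row `(c, e)` on earlier rows by `M` on the right turns each row
`(c', j)` into `(c', j + 1)`, which still precedes `(c, e + 1)`. The only rows that leave the
Krylov matrix are those with `j = δ`; reducing `X ^ (δ + 1)` modulo the minimal polynomial of `M`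
rewrites them through rows `(c', j')` with `j' ≤ δ`, which precede `(c, e + 1)` strictly in
`s_c + d`.
-/

/-- Priority comparison on pairs `(c,d)`: lexicographic on `(s_c + d, c)`. -/
def keyLt {m : ℕ} (s : Fin m → ℕ) (x y : Fin m × ℕ) : Prop :=
  s x.1 + x.2 < s y.1 + y.2 ∨ (s x.1 + x.2 = s y.1 + y.2 ∧ x.1 < y.1)

/-- Row `(c,d)` of the priority-permuted Krylov matrix `K_{δ,s}(E,M)` is a `K`-linear
combination of the rows preceding it. -/
def DepEarlier {K : Type*} [Field K] {m σ : ℕ} (E : Matrix (Fin m) (Fin σ) K)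
    (M : Matrix (Fin σ) (Fin σ) K) (s : Fin m → ℕ) (δ : ℕ) (c : Fin m) (d : ℕ) : Prop :=
  Matrix.vecMul (E c) (M ^ d) ∈
    Submodule.span K
      ((fun y : Fin m × ℕ => Matrix.vecMul (E y.1) (M ^ y.2)) ''
        {y | y.2 ≤ δ ∧ keyLt s y (c, d)})

theorem IsIntegral.pow_mem_span_pow_le {R S : Type*} [CommRing R] [Nontrivial R] [Ring S]
    [Algebra R S] {x : S} (hx : IsIntegral R x) {δ : ℕ} (hδ : (minpoly R x).natDegree ≤ δ)
    (k : ℕ) : x ^ k ∈ Submodule.span R ((x ^ ·) '' {j | j ≤ δ ∧ j ≤ k}) := by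
  by_cases hk : k ≤ δ
  · exact Submodule.subset_span ⟨k, ⟨hk, le_rfl⟩, rfl⟩
  · refine Submodule.span_mono ?_ (hx.mem_span_pow ⟨X ^ k, (aeval_X_pow x).symm⟩)
    rintro _ ⟨i, rfl⟩
    exact ⟨i, ⟨by omega, by omega⟩, rfl⟩

theorem keyLt_succ_of_le {m : ℕ} {s : Fin m → ℕ} {x y : Fin m × ℕ} (h : keyLt s y x) {j : ℕ}
    (hj : j ≤ y.2 + 1) : keyLt s (y.1, j) (x.1, x.2 + 1) := by
  simp only [keyLt] at *
  omega

namespace DepEarlier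

variable {K : Type*} [Field K] {m σ δ : ℕ} {E : Matrix (Fin m) (Fin σ) K}
  {M : Matrix (Fin σ) (Fin σ) K} {s : Fin m → ℕ} {c : Fin m}

theorem succ (hδ : (minpoly K M).natDegree ≤ δ) {e : ℕ} (h : DepEarlier E M s δ c e) :
    DepEarlier E M s δ c (e + 1) := by
  have hshift := Submodule.mem_map_of_mem (f := M.vecMulLinear) h
  rw [Submodule.map_span, Set.image_image] at hshift
  simp only [vecMulLinear_apply, vecMul_vecMul, ← pow_succ] at hshift
  refine Submodule.span_le.mpr ?_ hshift
  rintro _ ⟨y, ⟨-, hy⟩, rfl⟩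
  have hred := Submodule.mem_map_of_mem (f := vecMulBilin K K (E y.1))
    ((Matrix.isIntegral M).pow_mem_span_pow_le hδ (y.2 + 1))
  rw [Submodule.map_span, Set.image_image] at hred
  refine Submodule.span_mono ?_ hred
  rintro _ ⟨j, ⟨hjδ, hj⟩, rfl⟩
  exact ⟨(y.1, j), ⟨hjδ, keyLt_succ_of_le hy hj⟩, rfl⟩

theorem add (hδ : (minpoly K M).natDegree ≤ δ) {d : ℕ} (h : DepEarlier E M s δ c d) :
    ∀ d' : ℕ, DepEarlier E M s δ c (d + d')
  | 0 => h
  | d' + 1 => (h.add hδ d').succ hδ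

end DepEarlier

theorem depEarlier_propagates_general
    {K : Type*} [Field K] {m σ δ : ℕ}
    (E : Matrix (Fin m) (Fin σ) K) (M : Matrix (Fin σ) (Fin σ) K) (s : Fin m → ℕ)
    (hδ : (minpoly K M).natDegree ≤ δ)
    (c : Fin m) (d : ℕ)
    (hdep : DepEarlier E M s δ c d) :
    ∀ d' : ℕ, d' ≤ δ - d → DepEarlier E M s δ c (d + d') :=
  fun d' _ => hdep.add hδ d'

/-- if row `(c,d)` of the priority-permuted Krylov matrix is a linear
combination of the earlier rows, then so is row `(c,d+d')` for every `d' ≤ δ − d`. -/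
theorem depEarlier_propagates
    {K : Type*} [Field K] {m σ δ : ℕ}
    (E : Matrix (Fin m) (Fin σ) K) (M : Matrix (Fin σ) (Fin σ) K) (s : Fin m → ℕ)
    (hδ : (minpoly K M).natDegree ≤ δ)
    (c : Fin m) (d : ℕ) (hd : d ≤ δ)
    (hdep : DepEarlier E M s δ c d) :
    ∀ d' : ℕ, d' ≤ δ - d → DepEarlier E M s δ c (d + d') :=
  depEarlier_propagates_general E M s hδ c d hdep
end

section
/- Let Q ∈ K[X,Y_1,…,Y_r] where K is a field, (x,y) ∈ K^{r+1}, and μ ⊂ ℕ^{r+1} a support satisfying: if (i,j) ∈ μ and i > 0 then (i−1,j) ∈ μ. Say Q vanishes at (x,y) with support μ if Q(X+x, Y+y) has no monomial with exponent in μ. Then the set of vectors p = (p_j)_{j∈Γ} ∈ K[X]^{1×#Γ} (for a fixed finite Γ ⊂ ℕ^r) such that Σ_{j∈Γ} p_j(X)·Y^j vanishes at each of finitely many points (x_k, y_k) with supports μ_k (each satisfying the condition above) is a K[X]-submodule of K[X]^{1×#Γ}. -/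
open Polynomial

/-- The shifted polynomial `Q(X+x, Y+y)`, for `Q ∈ K[X][Y_1,…,Y_r]`. -/
noncomputable def shiftPoly {K : Type*} [Field K] {r : ℕ} (x : K) (y : Fin r → K)
    (Q : MvPolynomial (Fin r) (Polynomial K)) : MvPolynomial (Fin r) (Polynomial K) :=
  MvPolynomial.eval₂
    ((MvPolynomial.C : Polynomial K →+* MvPolynomial (Fin r) (Polynomial K)).comp
      (Polynomial.aeval (Polynomial.X + Polynomial.C x) : Polynomial K →ₐ[K] Polynomial K).toRingHom)
    (fun k => MvPolynomial.X k + MvPolynomial.C (Polynomial.C (y k))) Q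

/-- `Q` vanishes at `(x,y)` with support `μ ⊂ ℕ^{r+1}`: `Q(X+x, Y+y)` has no monomial
`X^i Y^j` with `(i,j) ∈ μ`. -/
noncomputable def VanishesAt {K : Type*} [Field K] {r : ℕ} (x : K) (y : Fin r → K)
    (μ : Set (ℕ × (Fin r →₀ ℕ))) (Q : MvPolynomial (Fin r) (Polynomial K)) : Prop :=
  ∀ (i : ℕ) (j : Fin r →₀ ℕ), (i, j) ∈ μ →
    (MvPolynomial.coeff j (shiftPoly x y Q)).coeff i = 0

lemma shiftPoly_add {K : Type*} [Field K] {r : ℕ} (x : K) (y : Fin r → K)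
    (Q R : MvPolynomial (Fin r) (Polynomial K)) :
    shiftPoly x y (Q + R) = shiftPoly x y Q + shiftPoly x y R :=
  MvPolynomial.eval₂_add _ _

lemma shiftPoly_C_mul {K : Type*} [Field K] {r : ℕ} (x : K) (y : Fin r → K)
    (c : Polynomial K) (Q : MvPolynomial (Fin r) (Polynomial K)) :
    shiftPoly x y (MvPolynomial.C c * Q) =
      MvPolynomial.C (Polynomial.aeval (Polynomial.X + Polynomial.C x) c) * shiftPoly x y Q := by
  unfold shiftPoly
  rw [MvPolynomial.eval₂_mul, MvPolynomial.eval₂_C]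
  rfl

lemma mu_down {r : ℕ} (μ : Set (ℕ × (Fin r →₀ ℕ)))
    (hμ : ∀ (i : ℕ) (j : Fin r →₀ ℕ), (i, j) ∈ μ → 0 < i → (i - 1, j) ∈ μ) :
    ∀ (i : ℕ) (j : Fin r →₀ ℕ), (i, j) ∈ μ → ∀ b ≤ i, (b, j) ∈ μ := by
  intro i
  induction i with
  | zero =>
    intro j h b hb
    rw [Nat.le_zero.mp hb]; exact h
  | succ n ih => 
    intro j h b hb
    rcases Nat.lt_or_ge b (n+1) with hlt | hge
    · exact ih j (by simpa using hμ (n+1) j h (Nat.succ_pos n)) b (Nat.lt_succ_iff.mp hlt)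
    · have : b = n + 1 := le_antisymm hb hge
      subst this; exact h

noncomputable def vanishingSubmodule
    {K : Type*} [Field K] (r np : ℕ) (Γ : Finset (Fin r →₀ ℕ))
    (x : Fin np → K) (y : Fin np → Fin r → K)
    (μ : Fin np → Set (ℕ × (Fin r →₀ ℕ)))
    (hμ : ∀ k (i : ℕ) (j : Fin r →₀ ℕ), (i, j) ∈ μ k → 0 < i → (i - 1, j) ∈ μ k) :
    Submodule (Polynomial K) (Γ → Polynomial K) :=
  { carrier := setOf fun p => ∀ k, VanishesAt (x k) (y k) (μ k)
        (∑ j : Γ, MvPolynomial.monomial (j : Fin r →₀ ℕ) (p j))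
    add_mem' := by
      intro p q hp hq k i j hij
      have hsum : (∑ j : Γ, MvPolynomial.monomial (j : Fin r →₀ ℕ) ((p + q) j))
          = (∑ j : Γ, MvPolynomial.monomial (j : Fin r →₀ ℕ) (p j))
            + (∑ j : Γ, MvPolynomial.monomial (j : Fin r →₀ ℕ) (q j)) := by
        rw [← Finset.sum_add_distrib]
        exact Finset.sum_congr rfl fun a _ => by simp
      rw [hsum, shiftPoly_add, MvPolynomial.coeff_add, Polynomial.coeff_add,
        hp k i j hij, hq k i j hij, add_zero]
    zero_mem' := by
      intro k i j hij
      simp [VanishesAt, shiftPoly]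
    smul_mem' := by
      intro c p hp k i j hij
      have hsum : (∑ j : Γ, MvPolynomial.monomial (j : Fin r →₀ ℕ) ((c • p) j))
          = MvPolynomial.C c * ∑ j : Γ, MvPolynomial.monomial (j : Fin r →₀ ℕ) (p j) := by
        rw [Finset.mul_sum]
        exact Finset.sum_congr rfl fun a _ => by
          simp [MvPolynomial.C_mul_monomial, smul_eq_mul]
      rw [hsum, shiftPoly_C_mul, MvPolynomial.coeff_C_mul, Polynomial.coeff_mul]
      apply Finset.sum_eq_zero
      intro ab hab
      have hb : ab.2 ≤ i := by
        have : ab.1 + ab.2 = i := Finset.HasAntidiagonal.mem_antidiagonal.mp hab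
        omega
      rw [hp k ab.2 j (mu_down (μ k) (hμ k) i j hij ab.2 hb), mul_zero] }

/-- the set of vectors `p = (p_j)_{j∈Γ}` such that `Σ_{j∈Γ} p_j(X)·Y^j`
vanishes at each point `(x_k, y_k)` with support `μ_k` (each support being closed
under decreasing the `X`-exponent) is a `K[X]`-submodule of `K[X]^{#Γ}`. -/
theorem vanishing_vectors_form_submodule
    {K : Type*} [Field K] (r np : ℕ) (Γ : Finset (Fin r →₀ ℕ))
    (x : Fin np → K) (y : Fin np → Fin r → K)
    (μ : Fin np → Set (ℕ × (Fin r →₀ ℕ)))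
    (hμ : ∀ k (i : ℕ) (j : Fin r →₀ ℕ), (i, j) ∈ μ k → 0 < i → (i - 1, j) ∈ μ k) :
    ∃ I : Submodule (Polynomial K) (Γ → Polynomial K),
      ∀ p : Γ → Polynomial K,
        p ∈ I ↔ ∀ k, VanishesAt (x k) (y k) (μ k)
          (∑ j : Γ, MvPolynomial.monomial (j : Fin r →₀ ℕ) (p j)) :=
  ⟨vanishingSubmodule r np Γ x y μ hμ, fun p => Iff.rfl⟩
end

section
/- Let B ∈ K[X]^{k×m} with row degrees d_1,…,d_k summing to ξ, let d ≥ 0 be a target degree, and for each i let α_i = 1 + ⌊d_i/(d+1)⌋. Define the expanded matrix B̃ with Σ_i α_i rows of degree at most d by writing row i of B as B_i = B̃_{(i,0)} + X^{d+1}·B̃_{(i,1)} + ⋯ + X^{(α_i−1)(d+1)}·B̃_{(i,α_i−1)} with deg B̃_{(i,j)} ≤ d. Then B̃ has at most k + ξ/(d+1) rows, and for any A ∈ K[X]^{m×n}, row i of the product B·A is recovered as Σ_{j=0}^{α_i−1} X^{j(d+1)} · (row (i,j) of B̃·A). -/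
/-!
Row `i` of `B` has degree at most `d_i < α_i (d+1)`, so splitting its coefficient range
`[0, α_i (d+1))` into `α_i` blocks of length `d+1` writes it as `Σ_j X^{j(d+1)} B̃_{(i,j)}`.
Compression of `B̃ A` follows from this row identity because `v ↦ v A` is linear.
The row count is `Σ_i (1 + ⌊d_i/(d+1)⌋) ≤ k + ⌊ξ/(d+1)⌋` since floors are superadditive.
-/

open Polynomial Matrix

/-- The partial linearization of `B` in degree `d`: row `i` of `B` is sliced into
`α i` chunks of degree at most `d`, chunk `(i,j)` collecting the coefficients of
degrees `j(d+1), …, j(d+1)+d`. -/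
noncomputable def partialLin {K : Type*} [Field K] {k m : ℕ} (d : ℕ) (α : Fin k → ℕ)
    (B : Matrix (Fin k) (Fin m) (Polynomial K)) :
    Matrix ((i : Fin k) × Fin (α i)) (Fin m) (Polynomial K) :=
  fun x c => ∑ t ∈ Finset.range (d + 1),
    Polynomial.C ((B x.1 c).coeff (x.2 * (d + 1) + t)) * Polynomial.X ^ t

theorem Finset.sum_range_mul_eq_sum_sum {M : Type*} [AddCommMonoid M] (f : ℕ → M) (N e : ℕ) :
    ∑ s ∈ range (N * e), f s = ∑ j ∈ range N, ∑ t ∈ range e, f (j * e + t) := by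
  induction N with
  | zero => simp
  | succ N ih => rw [Nat.succ_mul, sum_range_add, ih, sum_range_succ]

theorem Nat.sum_div_le_sum_div {ι : Type*} (s : Finset ι) (f : ι → ℕ) (n : ℕ) :
    ∑ i ∈ s, f i / n ≤ (∑ i ∈ s, f i) / n := by
  induction s using Finset.cons_induction with
  | empty => simp
  | cons a s ha ih =>
    rw [Finset.sum_cons, Finset.sum_cons]
    exact (Nat.add_le_add_left ih _).trans Nat.div_add_div_le_add_div

theorem Matrix.mul_apply_eq_sum_mul_of_apply_eq {l m n ι κ R : Type*} [Fintype m]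
    [NonUnitalSemiring R] (B : Matrix l m R) (L : Matrix ι m R) (A : Matrix m n R)
    (s : Finset κ) (w : κ → R) (f : κ → ι) (i : l)
    (h : ∀ c, B i c = ∑ j ∈ s, w j * L (f j) c) (c : n) :
    (B * A) i c = ∑ j ∈ s, w j * (L * A) (f j) c := by
  simp only [mul_apply, h, Finset.sum_mul, Finset.mul_sum, mul_assoc]
  exact Finset.sum_comm

namespace Polynomial

variable {R : Type*} [Semiring R]

noncomputable def chunk (d : ℕ) (p : R[X]) (j : ℕ) : R[X] :=
  ∑ t ∈ Finset.range (d + 1), C (p.coeff (j * (d + 1) + t)) * X ^ t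

theorem degree_chunk_le (d : ℕ) (p : R[X]) (j : ℕ) : (chunk d p j).degree ≤ d := by
  refine (degree_sum_le _ _).trans (Finset.sup_le fun t ht => ?_)
  refine (degree_C_mul_X_pow_le t _).trans ?_
  exact_mod_cast Nat.le_of_lt_succ (Finset.mem_range.1 ht)

theorem eq_sum_X_pow_mul_chunk {p : R[X]} {d N : ℕ} (hp : p.natDegree < N * (d + 1)) :
    p = ∑ j ∈ Finset.range N, X ^ (j * (d + 1)) * chunk d p j := by
  conv_lhs => rw [p.as_sum_range' (N * (d + 1)) hp, Finset.sum_range_mul_eq_sum_sum]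
  refine Finset.sum_congr rfl fun j _ => ?_
  rw [chunk, Finset.mul_sum]
  refine Finset.sum_congr rfl fun t _ => ?_
  rw [← C_mul_X_pow_eq_monomial, pow_add, ← mul_assoc, ← mul_assoc, X_pow_mul]

end Polynomial

theorem partialLin_apply {K : Type*} [Field K] {k m : ℕ} (d : ℕ) (α : Fin k → ℕ)
    (B : Matrix (Fin k) (Fin m) K[X]) (x : (i : Fin k) × Fin (α i)) (c : Fin m) :
    partialLin d α B x c = chunk d (B x.1 c) x.2 :=
  rfl

theorem eq_sum_X_pow_mul_partialLin {K : Type*} [Field K] {k m : ℕ} (d : ℕ) (α : Fin k → ℕ)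
    (B : Matrix (Fin k) (Fin m) K[X]) (i : Fin k) (c : Fin m)
    (hB : (B i c).natDegree < α i * (d + 1)) :
    B i c = ∑ j : Fin (α i), X ^ ((j : ℕ) * (d + 1)) * partialLin d α B ⟨i, j⟩ c := by
  simpa only [partialLin_apply, Finset.sum_range] using eq_sum_X_pow_mul_chunk hB

/-- partial linearization. With `B` of row degrees `d_i` summing to `ξ`,
target degree `d`, and `α_i = 1 + ⌊d_i/(d+1)⌋`, the expanded matrix `B̃` has entries of
degree at most `d`, satisfies the slicing identity
`B_i = Σ_j X^{j(d+1)} B̃_{(i,j)}`, has at most `k + ξ/(d+1)` rows, and for any `A` the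
product `B·A` is recovered from `B̃·A` by partial compression. -/
theorem partial_linearization_spec
    {K : Type*} [Field K] {k m : ℕ} (d : ℕ)
    (B : Matrix (Fin k) (Fin m) (Polynomial K))
    (dd : Fin k → ℕ)
    (hdd : ∀ i, (Finset.univ.sup fun j => (B i j).degree) = ((dd i : ℕ) : WithBot ℕ))
    (ξ : ℕ) (hξ : ξ = ∑ i, dd i)
    (α : Fin k → ℕ) (hα : ∀ i, α i = 1 + dd i / (d + 1)) :
    (∀ (x : (i : Fin k) × Fin (α i)) (c : Fin m),
        (partialLin d α B x c).degree ≤ (d : WithBot ℕ))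
    ∧ (∀ (i : Fin k) (c : Fin m),
        B i c = ∑ j : Fin (α i),
          Polynomial.X ^ ((j : ℕ) * (d + 1)) * partialLin d α B ⟨i, j⟩ c)
    ∧ (Fintype.card ((i : Fin k) × Fin (α i)) ≤ k + ξ / (d + 1))
    ∧ (∀ {n : ℕ} (A : Matrix (Fin m) (Fin n) (Polynomial K)) (i : Fin k) (c : Fin n),
        (B * A) i c = ∑ j : Fin (α i),
          Polynomial.X ^ ((j : ℕ) * (d + 1)) * (partialLin d α B * A) ⟨i, j⟩ c) := by
  have natDegree_lt (i : Fin k) (c : Fin m) : (B i c).natDegree < α i * (d + 1) := by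
    have hle : (B i c).natDegree ≤ dd i := natDegree_le_iff_degree_le.2 <|
      hdd i ▸ Finset.le_sup (f := fun j => (B i j).degree) (Finset.mem_univ c)
    rw [hα i, mul_comm, add_comm 1]
    exact hle.trans_lt (Nat.lt_mul_div_succ _ d.succ_pos)
  have slicing i c := eq_sum_X_pow_mul_partialLin d α B i c (natDegree_lt i c)
  refine ⟨fun x c => degree_chunk_le d _ _, slicing, ?_,
    fun A i c => mul_apply_eq_sum_mul_of_apply_eq _ _ A _ _ _ i (slicing i) c⟩
  calc Fintype.card ((i : Fin k) × Fin (α i))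
      = k + ∑ i, dd i / (d + 1) := by
        simp only [Fintype.card_sigma, Fintype.card_fin, hα, Finset.sum_add_distrib,
          Finset.sum_const, Finset.card_univ, smul_eq_mul, mul_one]
    _ ≤ k + ξ / (d + 1) := hξ ▸ Nat.add_le_add_left (Nat.sum_div_le_sum_div _ _ _) k
end
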